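/- Let P be a μ-invariant Markov kernel satisfying an L¹-WPI with function α₁ : (0,1/2) → (0,∞): var⁽¹⁾_μ(f) ≤ α₁(r)·𝓔₁(P,f) + r·‖f‖_osc for all r ∈ (0,1/2) and f ∈ L¹(μ). Then P satisfies an L²-WPI with α(r) := inf_{θ∈(0,1)} α₁((1−θ)r)²/(2θ(1−θ)) ≤ 2·α₁(r/2)²: namely ‖f‖₂² ≤ α(r)·𝓔(P,f) + r·‖f‖²_osc for all r > 0, f ∈ L²₀(μ). -/

import Mathlib

/-!
Split `f` at a median `m` into `g₊ = (f - m)⁺` and `g₋ = (f - m)⁻`, each vanishing on a set of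
measure at least `1/2`. For such a `g ≥ 0`, `‖g‖₂² ≤ var⁽¹⁾(g²)`, which the `L¹`-WPI at level
`(1 - θ) r` bounds by `α₁ 𝓔₁(P, g²) + (1 - θ) r ‖g‖²_∞`. Since
`|g(y)² - g(x)²| = |g(y) - g(x)| (g(y) + g(x))`, Young's inequality and the invariance of `μ` give
`α₁ 𝓔₁(P, g²) ≤ α₁² / (2θ) 𝓔(P, g) + θ ‖g‖₂²`. Adding the bounds for `g₊` and `g₋` and using
`‖f‖₂² ≤ ‖f - m‖₂²` (mean zero), `𝓔(P, g₊) + 𝓔(P, g₋) ≤ 𝓔(P, f)` and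
`‖g₊‖²_∞ + ‖g₋‖²_∞ ≤ ‖f‖²_osc` yields `(1 - θ) ‖f‖₂² ≤ α₁² / (2θ) 𝓔(P, f) + (1 - θ) r ‖f‖²_osc`.
-/

open MeasureTheory ProbabilityTheory Filter Set

lemma sq_posPart_sub_add_sq_negPart_sub_le (a b : ℝ) :
    (a⁺ - b⁺) ^ 2 + (a⁻ - b⁻) ^ 2 ≤ (a - b) ^ 2 := by
  simp only [posPart, negPart]
  rcases le_total a 0 with ha | ha <;> rcases le_total b 0 with hb | hb <;>
    simp only [ha, hb, max_eq_left, max_eq_right, neg_nonneg, neg_nonpos] <;> nlinarith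

lemma sq_posPart_add_sq_negPart (a : ℝ) : a⁺ ^ 2 + a⁻ ^ 2 = a ^ 2 := by
  simp only [posPart, negPart]
  rcases le_total a 0 with ha | ha <;>
    simp only [ha, max_eq_left, max_eq_right, neg_nonneg, neg_nonpos] <;> ring

/-- Young's inequality `2XY ≤ X²/θ + θY²` with `X = a|u - v|`, `Y = u + v`. -/
lemma mul_abs_sq_sub_sq_le {u v : ℝ} (hu : 0 ≤ u) (hv : 0 ≤ v) (a : ℝ) {θ : ℝ} (hθ : 0 < θ) :
    a * |u ^ 2 - v ^ 2| ≤ a ^ 2 / (2 * θ) * (u - v) ^ 2 + θ * (u ^ 2 + v ^ 2) := by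
  have hfac : |u ^ 2 - v ^ 2| = |u - v| * (u + v) := by
    rw [show u ^ 2 - v ^ 2 = (u - v) * (u + v) by ring, abs_mul, abs_of_nonneg (add_nonneg hu hv)]
  rw [hfac, div_mul_eq_mul_div, ← sq_abs (u - v), div_add' _ _ _ (by positivity),
    le_div_iff₀ (by positivity)]
  nlinarith [sq_nonneg (a * |u - v| - θ * (u + v)), sq_nonneg (θ * (u - v))]

lemma le_ciInf_mul_add {ι : Sort*} [Nonempty ι] {c : ι → ℝ} {x y D : ℝ} (hD : 0 ≤ D)
    (h : ∀ i, x ≤ c i * D + y) : x ≤ (⨅ i, c i) * D + y := by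
  rw [Real.iInf_mul_of_nonneg hD, ← sub_le_iff_le_add]
  exact le_ciInf fun i => sub_le_iff_le_add.2 (h i)

lemma ciInf_sq_div_le (φ : ℝ → ℝ) (r : ℝ) :
    (⨅ θ : Ioo (0 : ℝ) 1, φ ((1 - (θ : ℝ)) * r) ^ 2 / (2 * (θ : ℝ) * (1 - (θ : ℝ))))
      ≤ 2 * φ (r / 2) ^ 2 := by
  have hbdd : BddBelow (range fun θ : Ioo (0 : ℝ) 1 =>
      φ ((1 - (θ : ℝ)) * r) ^ 2 / (2 * (θ : ℝ) * (1 - (θ : ℝ)))) := by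
    refine ⟨0, ?_⟩
    rintro _ ⟨⟨θ, hθ₀, hθ₁⟩, rfl⟩
    exact div_nonneg (sq_nonneg _) (mul_nonneg (by positivity) (by linarith))
  refine (ciInf_le hbdd ⟨1 / 2, by norm_num, by norm_num⟩).trans_eq ?_
  norm_num [div_eq_mul_inv, mul_comm]

lemma exists_median (ν : Measure ℝ) [IsProbabilityMeasure ν] :
    ∃ m, 1 / 2 ≤ ν.real (Iic m) ∧ 1 / 2 ≤ ν.real (Ici m) := by
  set F := cdf ν
  set T := {t | 1 / 2 ≤ F t}
  obtain ⟨t₁, ht₁⟩ :=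
    ((tendsto_cdf_atTop ν).eventually (lt_mem_nhds (by norm_num : (1 / 2 : ℝ) < 1))).exists
  obtain ⟨t₀, ht₀⟩ := eventually_atBot.1
    ((tendsto_cdf_atBot ν).eventually (gt_mem_nhds (by norm_num : (0 : ℝ) < 1 / 2)))
  have hT : T.Nonempty := ⟨t₁, ht₁.le⟩
  have hTbdd : BddBelow T := ⟨t₀, fun t ht => le_of_not_gt fun h => (ht₀ t h.le).not_ge ht⟩
  refine ⟨sInf T, ?_, ?_⟩
  · rw [← cdf_eq_real]
    refine ge_of_tendsto ((F.right_continuous _).mono Ioi_subset_Ici_self) ?_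
    filter_upwards [self_mem_nhdsWithin] with t ht
    obtain ⟨s, hs, hst⟩ := exists_lt_of_csInf_lt hT ht
    exact hs.trans (F.mono hst.le)
  · have hlim : Function.leftLim F (sInf T) ≤ 1 / 2 := by
      refine le_of_tendsto (F.mono.tendsto_leftLim _) ?_
      filter_upwards [self_mem_nhdsWithin] with t ht
      exact le_of_lt (not_le.1 (show t ∉ T from notMem_of_lt_csInf ht hTbdd))
    have hIio : ν.real (Iio (sInf T)) ≤ 1 / 2 := by
      rw [measureReal_def, ← measure_cdf ν, F.measure_Iio (tendsto_cdf_atBot ν), sub_zero,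
        ENNReal.toReal_ofReal']
      exact max_le hlim (by norm_num)
    rw [← compl_Iio, measureReal_compl measurableSet_Iio, probReal_univ]
    linarith

section

variable {E : Type*} [MeasurableSpace E]

noncomputable section

def l1Variance (μ : Measure E) (f : E → ℝ) : ℝ := ⨅ c : ℝ, ∫ x, |f x - c| ∂μ

def dirichletForm (μ : Measure E) (P : Kernel E E) (f : E → ℝ) : ℝ :=
  (1 / 2) * ∫ x, ∫ y, (f y - f x) ^ 2 ∂(P x) ∂μ

def l1DirichletForm (μ : Measure E) (P : Kernel E E) (f : E → ℝ) : ℝ :=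
  (1 / 2) * ∫ x, ∫ y, |f y - f x| ∂(P x) ∂μ

def L1WeakPoincare (μ : Measure E) (P : Kernel E E) (a r : ℝ) : Prop :=
  ∀ f : E → ℝ, Measurable f → Integrable f μ →
    l1Variance μ f ≤ a * l1DirichletForm μ P f + r * (essSup f μ - essInf f μ)

end

lemma dirichletForm_nonneg (μ : Measure E) (P : Kernel E E) (f : E → ℝ) :
    0 ≤ dirichletForm μ P f :=
  mul_nonneg (by norm_num) (integral_nonneg fun _ => integral_nonneg fun _ => sq_nonneg _)

lemma isCoboundedUnder_le_ae (μ : Measure E) [NeZero μ] (f : E → ℝ) :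
    IsCoboundedUnder (· ≤ ·) (ae μ) f := by
  by_contra h
  have hlt : ∀ n : ℕ, ∀ᵐ x ∂μ, f x < -n := fun n => by
    by_contra hn
    exact h (.of_frequently_ge ((not_eventually.1 hn).mono fun _ => le_of_not_gt))
  obtain ⟨x, hx⟩ := (ae_all_iff.2 hlt).exists
  obtain ⟨n, hn⟩ := exists_nat_gt (-f x)
  linarith [hx n]

lemma integrable_sq_of_ae_le {μ : Measure E} [IsFiniteMeasure μ] {g : E → ℝ} (hg : Measurable g)
    (hg0 : ∀ x, 0 ≤ g x) {C : ℝ} (hC : ∀ᵐ x ∂μ, g x ≤ C) : Integrable (fun x => g x ^ 2) μ :=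
  .of_bound (hg.pow_const 2).aestronglyMeasurable (C ^ 2) (hC.mono fun x hx => by
    rw [Real.norm_of_nonneg (sq_nonneg _)]; exact pow_le_pow_left₀ (hg0 x) hx 2)

section ProbabilityMeasure

variable {μ : Measure E} [IsProbabilityMeasure μ]

lemma integral_le_integral_abs_sub {h : E → ℝ} (hh : Integrable h μ) {A : Set E}
    (hA : MeasurableSet A) (hhA : ∀ x ∈ A, h x = 0) (hμA : 1 / 2 ≤ μ.real A) (c : ℝ) :
    ∫ x, h x ∂μ ≤ ∫ x, |h x - c| ∂μ := by
  rcases lt_or_ge c 0 with hc | hc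
  · exact integral_mono hh (hh.sub (integrable_const c)).abs fun x => by
      linarith [le_abs_self (h x - c)]
  have hpt : ∀ x, h x - c + A.indicator (fun _ => 2 * c) x ≤ |h x - c| := fun x => by
    by_cases hx : x ∈ A
    · simp [hx, hhA x hx, abs_of_nonneg hc]; linarith
    · simpa [hx] using le_abs_self (h x - c)
  have hsub : Integrable (fun x => h x - c) μ := hh.sub (integrable_const c)
  have hind : Integrable (A.indicator fun _ => 2 * c) μ := (integrable_const _).indicator hA
  have hval : ∫ x, (h x - c + A.indicator (fun _ => 2 * c) x) ∂μ
      = ∫ x, h x ∂μ + c * (2 * μ.real A - 1) := by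
    rw [integral_add hsub hind, integral_sub hh (integrable_const c), integral_indicator_const _ hA]
    simp only [integral_const, probReal_univ, smul_eq_mul]
    ring
  calc ∫ x, h x ∂μ ≤ ∫ x, h x ∂μ + c * (2 * μ.real A - 1) := by nlinarith
    _ = ∫ x, (h x - c + A.indicator (fun _ => 2 * c) x) ∂μ := hval.symm
    _ ≤ ∫ x, |h x - c| ∂μ := integral_mono (hsub.add hind) hsub.abs hpt

lemma integral_le_l1Variance {h : E → ℝ} (hh : Integrable h μ) {A : Set E}
    (hA : MeasurableSet A) (hhA : ∀ x ∈ A, h x = 0) (hμA : 1 / 2 ≤ μ.real A) :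
    ∫ x, h x ∂μ ≤ l1Variance μ h :=
  le_ciInf (integral_le_integral_abs_sub hh hA hhA hμA)

lemma integral_sq_le_integral_sub_sq {f : E → ℝ} (hf : AEMeasurable f μ)
    (hmean : ∫ x, f x ∂μ = 0) (c : ℝ) : ∫ x, f x ^ 2 ∂μ ≤ ∫ x, (f x - c) ^ 2 ∂μ := by
  rw [← variance_of_integral_eq_zero hf hmean, ← variance_sub_const hf.aestronglyMeasurable c]
  exact variance_le_expectation_sq (hf.sub_const c).aestronglyMeasurable

lemma integral_sq_le_sq_sub_div_four_of_integral_eq_zero {f : E → ℝ} (hf : AEMeasurable f μ)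
    (hmean : ∫ x, f x ∂μ = 0) {I S : ℝ} (hI : ∀ᵐ x ∂μ, I ≤ f x) (hS : ∀ᵐ x ∂μ, f x ≤ S) :
    ∫ x, f x ^ 2 ∂μ ≤ (S - I) ^ 2 / 4 := by
  calc ∫ x, f x ^ 2 ∂μ ≤ ∫ x, (f x - (S + I) / 2) ^ 2 ∂μ :=
        integral_sq_le_integral_sub_sq hf hmean _
    _ ≤ ∫ _, ((S - I) / 2) ^ 2 ∂μ := by
        refine integral_mono_of_nonneg (ae_of_all _ fun x => sq_nonneg _) (integrable_const _) ?_
        filter_upwards [hI, hS] with x h₁ h₂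
        nlinarith
    _ = (S - I) ^ 2 / 4 := by simp only [integral_const, probReal_univ, one_smul]; ring

lemma exists_median_mem_Icc {f : E → ℝ} (hf : Measurable f) {I S : ℝ}
    (hI : ∀ᵐ x ∂μ, I ≤ f x) (hS : ∀ᵐ x ∂μ, f x ≤ S) :
    ∃ m, I ≤ m ∧ m ≤ S ∧ 1 / 2 ≤ μ.real (f ⁻¹' Iic m) ∧ 1 / 2 ≤ μ.real (f ⁻¹' Ici m) := by
  have := Measure.isProbabilityMeasure_map (μ := μ) hf.aemeasurable
  obtain ⟨m, hm₁, hm₂⟩ := exists_median (μ.map f)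
  rw [map_measureReal_apply hf measurableSet_Iic] at hm₁
  rw [map_measureReal_apply hf measurableSet_Ici] at hm₂
  have hfreq : ∀ {s : Set E}, 1 / 2 ≤ μ.real s → ∃ᵐ x ∂μ, x ∈ s := fun hs =>
    frequently_ae_iff.2 fun h0 => by
      rw [ofPred_mem_eq] at h0
      norm_num [measureReal_def, h0] at hs
  obtain ⟨x₁, hx₁, hx₁I⟩ := ((hfreq hm₁).and_eventually hI).exists
  obtain ⟨x₂, hx₂, hx₂S⟩ := ((hfreq hm₂).and_eventually hS).exists
  exact ⟨m, hx₁I.trans hx₁, le_trans hx₂ hx₂S, hm₁, hm₂⟩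

/-- For `f` unbounded below, `essInf` takes the junk value `0`, so the inequality fails for
`min f 0 - K` once `K` is large. -/
lemma isBoundedUnder_ge_ae_of_L1WeakPoincare {P : Kernel E E} {a r : ℝ}
    (hW : L1WeakPoincare μ P a r) (hr : 0 < r) {f : E → ℝ} (hf : Measurable f)
    (hfi : Integrable f μ) : IsBoundedUnder (· ≥ ·) (ae μ) f := by
  by_contra hunb
  set D := l1DirichletForm μ P fun x => min (f x) 0
  set K := (a * D + 1) / r
  set g : E → ℝ := fun x => min (f x) 0 - K
  have hgD : l1DirichletForm μ P g = D := by
    simp only [g, D, l1DirichletForm, sub_sub_sub_cancel_right]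
  have hinf : essInf g μ = 0 := Real.liminf_of_not_isBoundedUnder fun ⟨b, hb⟩ =>
    hunb ⟨b + K, (eventually_map.1 hb).mono fun x hx => show b + K ≤ f x by
      linarith [min_le_left (f x) 0, show b ≤ min (f x) 0 - K from hx]⟩
  have hsup : essSup g μ ≤ -K :=
    essSup_le_of_ae_le _ (ae_of_all _ fun x => by simp [g]) (isCoboundedUnder_le_ae μ g)
  have hvar : 0 ≤ l1Variance μ g := Real.iInf_nonneg fun c => integral_nonneg fun x => abs_nonneg _
  have hWg := hW g ((hf.min measurable_const).sub measurable_const)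
    ((hfi.inf (integrable_const 0)).sub (integrable_const K))
  have hK : r * K = a * D + 1 := by simp only [K]; field_simp
  rw [hgD, hinf] at hWg
  nlinarith [mul_le_mul_of_nonneg_left hsup hr.le]

end ProbabilityMeasure

lemma ProbabilityTheory.Kernel.invariant_of_forall_lintegral_eq {μ : Measure E} {P : Kernel E E}
    (hinv : ∀ B, MeasurableSet B → ∫⁻ x, P x B ∂μ = μ B) : P.Invariant μ := by
  ext B hB
  rw [Measure.bind_apply hB P.aemeasurable, hinv B hB]

section Invariant

variable {μ : Measure E} [IsProbabilityMeasure μ] {P : Kernel E E} [IsMarkovKernel P]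

lemma ae_fst_compProd_of_ae {p : E → Prop} (h : ∀ᵐ x ∂μ, p x) : ∀ᵐ z ∂(μ ⊗ₘ P), p z.1 := by
  rw [← Measure.fst_compProd μ P] at h
  exact ae_of_ae_map measurable_fst.aemeasurable h

lemma integral_fst_compProd {g : E → ℝ} (hg : AEStronglyMeasurable g μ) :
    ∫ z, g z.1 ∂(μ ⊗ₘ P) = ∫ x, g x ∂μ := by
  rw [← Measure.fst_compProd μ P] at hg
  calc ∫ z, g z.1 ∂(μ ⊗ₘ P) = ∫ x, g x ∂(μ ⊗ₘ P).fst :=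
        (integral_map measurable_fst.aemeasurable hg).symm
    _ = ∫ x, g x ∂μ := by rw [Measure.fst_compProd]

namespace ProbabilityTheory.Kernel.Invariant

lemma snd_compProd (hP : P.Invariant μ) : (μ ⊗ₘ P).snd = μ := by
  rw [Measure.snd_compProd]
  exact hP

lemma ae_snd_compProd (hP : P.Invariant μ) {p : E → Prop} (h : ∀ᵐ x ∂μ, p x) :
    ∀ᵐ z ∂(μ ⊗ₘ P), p z.2 := by
  rw [← hP.snd_compProd] at h
  exact ae_of_ae_map measurable_snd.aemeasurable h

lemma integral_snd_compProd (hP : P.Invariant μ) {g : E → ℝ} (hg : AEStronglyMeasurable g μ) :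
    ∫ z, g z.2 ∂(μ ⊗ₘ P) = ∫ x, g x ∂μ := by
  rw [← hP.snd_compProd] at hg
  calc ∫ z, g z.2 ∂(μ ⊗ₘ P) = ∫ x, g x ∂(μ ⊗ₘ P).snd :=
        (integral_map measurable_snd.aemeasurable hg).symm
    _ = ∫ x, g x ∂μ := by rw [hP.snd_compProd]

lemma integrable_compProd_of_ae_abs_le (hP : P.Invariant μ) {g : E → ℝ} (hg : Measurable g)
    {C : ℝ} (hC : ∀ᵐ x ∂μ, |g x| ≤ C) {F : ℝ × ℝ → ℝ} (hF : Continuous F) :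
    Integrable (fun z : E × E => F (g z.1, g z.2)) (μ ⊗ₘ P) := by
  obtain ⟨M, hM⟩ :=
    (isCompact_closedBall (0 : ℝ × ℝ) C).exists_bound_of_continuousOn hF.continuousOn
  refine Integrable.of_bound (hF.measurable.comp ((hg.comp measurable_fst).prodMk
    (hg.comp measurable_snd))).aestronglyMeasurable M ?_
  filter_upwards [ae_fst_compProd_of_ae hC, hP.ae_snd_compProd hC] with z h₁ h₂
  exact hM _ (mem_closedBall_zero_iff.2 (by simpa [Prod.norm_def] using ⟨h₁, h₂⟩))

end ProbabilityTheory.Kernel.Invariant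

lemma mul_l1DirichletForm_sq_le (hP : P.Invariant μ) {g : E → ℝ} (hg : Measurable g)
    (hg0 : ∀ x, 0 ≤ g x) {C : ℝ} (hC : ∀ᵐ x ∂μ, g x ≤ C) (a : ℝ) {θ : ℝ} (hθ : 0 < θ) :
    a * l1DirichletForm μ P (fun x => g x ^ 2)
      ≤ a ^ 2 / (2 * θ) * dirichletForm μ P g + θ * ∫ x, g x ^ 2 ∂μ := by
  have hint : ∀ {F : ℝ × ℝ → ℝ}, Continuous F →
      Integrable (fun z : E × E => F (g z.1, g z.2)) (μ ⊗ₘ P) :=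
    hP.integrable_compProd_of_ae_abs_le hg (hC.mono fun x hx => by rwa [abs_of_nonneg (hg0 x)])
  have hΔ₁ : Integrable (fun z : E × E => |g z.2 ^ 2 - g z.1 ^ 2|) (μ ⊗ₘ P) :=
    hint (F := fun p => |p.2 ^ 2 - p.1 ^ 2|) (by fun_prop)
  have hΔ₂ : Integrable (fun z : E × E => (g z.2 - g z.1) ^ 2) (μ ⊗ₘ P) :=
    hint (F := fun p => (p.2 - p.1) ^ 2) (by fun_prop)
  have hsq₁ : Integrable (fun z : E × E => g z.1 ^ 2) (μ ⊗ₘ P) :=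
    hint (F := fun p => p.1 ^ 2) (by fun_prop)
  have hsq₂ : Integrable (fun z : E × E => g z.2 ^ 2) (μ ⊗ₘ P) :=
    hint (F := fun p => p.2 ^ 2) (by fun_prop)
  have hΔ₂' : Integrable (fun z : E × E => a ^ 2 / (2 * θ) * (g z.2 - g z.1) ^ 2) (μ ⊗ₘ P) :=
    hΔ₂.const_mul _
  have hsum : Integrable (fun z : E × E => θ * (g z.2 ^ 2 + g z.1 ^ 2)) (μ ⊗ₘ P) :=
    (hsq₂.add hsq₁).const_mul θ
  have hgm : AEStronglyMeasurable (fun x => g x ^ 2) μ := (hg.pow_const 2).aestronglyMeasurable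
  have hmarg : ∫ z, (g z.2 ^ 2 + g z.1 ^ 2) ∂(μ ⊗ₘ P) = 2 * ∫ x, g x ^ 2 ∂μ := by
    rw [integral_add hsq₂ hsq₁, hP.integral_snd_compProd hgm, integral_fst_compProd hgm]
    ring
  calc a * l1DirichletForm μ P (fun x => g x ^ 2)
      = 1 / 2 * ∫ z, a * |g z.2 ^ 2 - g z.1 ^ 2| ∂(μ ⊗ₘ P) := by
        rw [l1DirichletForm, ← Measure.integral_compProd hΔ₁, integral_const_mul]; ring
    _ ≤ 1 / 2 * ∫ z, (a ^ 2 / (2 * θ) * (g z.2 - g z.1) ^ 2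
          + θ * (g z.2 ^ 2 + g z.1 ^ 2)) ∂(μ ⊗ₘ P) :=
        mul_le_mul_of_nonneg_left (integral_mono (hΔ₁.const_mul a) (hΔ₂'.add hsum)
          fun z => mul_abs_sq_sub_sq_le (hg0 z.2) (hg0 z.1) a hθ) (by norm_num)
    _ = a ^ 2 / (2 * θ) * dirichletForm μ P g + θ * ∫ x, g x ^ 2 ∂μ := by
        rw [integral_add hΔ₂' hsum, integral_const_mul, integral_const_mul, hmarg, dirichletForm,
          ← Measure.integral_compProd hΔ₂]
        ring

lemma one_sub_mul_integral_sq_le_of_L1WeakPoincare (hP : P.Invariant μ) {a r θ : ℝ}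
    (hW : L1WeakPoincare μ P a r) (hr : 0 ≤ r) (hθ : 0 < θ)
    {g : E → ℝ} (hg : Measurable g) (hg0 : ∀ x, 0 ≤ g x) {C : ℝ} (hC : ∀ᵐ x ∂μ, g x ≤ C)
    {A : Set E} (hA : MeasurableSet A) (hgA : ∀ x ∈ A, g x = 0) (hμA : 1 / 2 ≤ μ.real A) :
    (1 - θ) * ∫ x, g x ^ 2 ∂μ ≤ a ^ 2 / (2 * θ) * dirichletForm μ P g + r * C ^ 2 := by
  have hsq : ∀ᵐ x ∂μ, g x ^ 2 ≤ C ^ 2 := hC.mono fun x hx => pow_le_pow_left₀ (hg0 x) hx 2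
  have hint : Integrable (fun x => g x ^ 2) μ := integrable_sq_of_ae_le hg hg0 hC
  have hosc : essSup (fun x => g x ^ 2) μ - essInf (fun x => g x ^ 2) μ ≤ C ^ 2 := by
    have hsup : essSup (fun x => g x ^ 2) μ ≤ C ^ 2 :=
      essSup_le_of_ae_le _ hsq (isCoboundedUnder_le_of_le _ fun x => sq_nonneg (g x))
    have hinf : 0 ≤ essInf (fun x => g x ^ 2) μ :=
      le_essInf_of_ae_le _ (ae_of_all _ fun x => sq_nonneg (g x))
        (isCoboundedUnder_ge_of_eventually_le _ hsq)
    linarith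
  have hvar : ∫ x, g x ^ 2 ∂μ ≤ l1Variance μ (fun x => g x ^ 2) :=
    integral_le_l1Variance hint hA (fun x hx => by simp [hgA x hx]) hμA
  linarith [hW _ (hg.pow_const 2) hint, mul_le_mul_of_nonneg_left hosc hr,
    mul_l1DirichletForm_sq_le hP hg hg0 hC a hθ]

lemma dirichletForm_posPart_add_negPart_le (hP : P.Invariant μ) {f : E → ℝ} (hf : Measurable f)
    {C : ℝ} (hC : ∀ᵐ x ∂μ, |f x| ≤ C) (m : ℝ) :
    dirichletForm μ P (fun x => (f x - m)⁺) + dirichletForm μ P (fun x => (f x - m)⁻)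
      ≤ dirichletForm μ P f := by
  have hint : ∀ {F : ℝ × ℝ → ℝ}, Continuous F →
      Integrable (fun z : E × E => F (f z.1, f z.2)) (μ ⊗ₘ P) :=
    hP.integrable_compProd_of_ae_abs_le hf hC
  have hpos : Integrable (fun z : E × E => ((f z.2 - m)⁺ - (f z.1 - m)⁺) ^ 2) (μ ⊗ₘ P) :=
    hint (F := fun p => ((p.2 - m)⁺ - (p.1 - m)⁺) ^ 2) (by fun_prop)
  have hneg : Integrable (fun z : E × E => ((f z.2 - m)⁻ - (f z.1 - m)⁻) ^ 2) (μ ⊗ₘ P) :=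
    hint (F := fun p => ((p.2 - m)⁻ - (p.1 - m)⁻) ^ 2) (by fun_prop)
  have h : Integrable (fun z : E × E => (f z.2 - f z.1) ^ 2) (μ ⊗ₘ P) :=
    hint (F := fun p => (p.2 - p.1) ^ 2) (by fun_prop)
  simp only [dirichletForm]
  rw [← Measure.integral_compProd hpos, ← Measure.integral_compProd hneg,
    ← Measure.integral_compProd h, ← mul_add, ← integral_add hpos hneg]
  refine mul_le_mul_of_nonneg_left (integral_mono (hpos.add hneg) h fun z => ?_) (by norm_num)
  simpa only [sub_sub_sub_cancel_right] using
    sq_posPart_sub_add_sq_negPart_sub_le (f z.2 - m) (f z.1 - m)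

lemma integral_sq_le_of_L1WeakPoincare (hP : P.Invariant μ) {a r θ : ℝ}
    (hW : L1WeakPoincare μ P a ((1 - θ) * r)) (hr : 0 < r) (hθ : θ ∈ Ioo 0 1)
    {f : E → ℝ} (hf : Measurable f) (hmean : ∫ x, f x ∂μ = 0)
    (hle : IsBoundedUnder (· ≤ ·) (ae μ) f) (hge : IsBoundedUnder (· ≥ ·) (ae μ) f) :
    ∫ x, f x ^ 2 ∂μ
      ≤ a ^ 2 / (2 * θ * (1 - θ)) * dirichletForm μ P f
        + r * (essSup f μ - essInf f μ) ^ 2 := by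
  obtain ⟨hθ₀, hθ₁⟩ := hθ
  have h1θ : 0 < 1 - θ := sub_pos.2 hθ₁
  set S := essSup f μ
  set I := essInf f μ
  have hS : ∀ᵐ x ∂μ, f x ≤ S := ae_le_essSup hle
  have hI : ∀ᵐ x ∂μ, I ≤ f x := ae_essInf_le hge
  obtain ⟨m, hIm, hmS, hm₁, hm₂⟩ := exists_median_mem_Icc hf hI hS
  have hposm : Measurable fun x => (f x - m)⁺ := (hf.sub_const m).max measurable_const
  have hnegm : Measurable fun x => (f x - m)⁻ := (hf.sub_const m).neg.max measurable_const
  have hposC : ∀ᵐ x ∂μ, (f x - m)⁺ ≤ S - m :=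
    hS.mono fun x hx => max_le (by linarith) (by linarith)
  have hnegC : ∀ᵐ x ∂μ, (f x - m)⁻ ≤ m - I :=
    hI.mono fun x hx => max_le (by linarith) (by linarith)
  have hpos := one_sub_mul_integral_sq_le_of_L1WeakPoincare hP hW (by positivity) hθ₀
    hposm (fun x => posPart_nonneg _) hposC (hf measurableSet_Iic)
    (fun x hx => posPart_eq_zero.2 (sub_nonpos.2 hx)) hm₁
  have hneg := one_sub_mul_integral_sq_le_of_L1WeakPoincare hP hW (by positivity) hθ₀
    hnegm (fun x => negPart_nonneg _) hnegC (hf measurableSet_Ici)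
    (fun x hx => negPart_eq_zero.2 (sub_nonneg.2 hx)) hm₂
  have hsplit : ∫ x, f x ^ 2 ∂μ ≤ ∫ x, (f x - m)⁺ ^ 2 ∂μ + ∫ x, (f x - m)⁻ ^ 2 ∂μ := by
    rw [← integral_add (integrable_sq_of_ae_le hposm (fun x => posPart_nonneg _) hposC)
      (integrable_sq_of_ae_le hnegm (fun x => negPart_nonneg _) hnegC)]
    simpa only [sq_posPart_add_sq_negPart] using
      integral_sq_le_integral_sub_sq hf.aemeasurable hmean m
  have hdec := dirichletForm_posPart_add_negPart_le hP hf (C := |S| + |I|)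
    ((hS.and hI).mono fun x hx => abs_le.2 ⟨by linarith [hx.2, neg_abs_le I, abs_nonneg S],
      by linarith [hx.1, le_abs_self S, abs_nonneg I]⟩) m
  have hcoef : 0 ≤ a ^ 2 / (2 * θ) := by positivity
  have hosc : (S - m) ^ 2 + (m - I) ^ 2 ≤ (S - I) ^ 2 := by nlinarith
  refine le_of_mul_le_mul_left ?_ h1θ
  calc (1 - θ) * ∫ x, f x ^ 2 ∂μ
      ≤ a ^ 2 / (2 * θ) * dirichletForm μ P f + (1 - θ) * r * (S - I) ^ 2 := by
        nlinarith [mul_le_mul_of_nonneg_left hdec hcoef, mul_le_mul_of_nonneg_left hsplit h1θ.le,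
          mul_le_mul_of_nonneg_left hosc (mul_pos h1θ hr).le]
    _ = (1 - θ) * (a ^ 2 / (2 * θ * (1 - θ)) * dirichletForm μ P f + r * (S - I) ^ 2) := by
        field_simp

end Invariant

end

theorem L1_WPI_implies_L2_WPI_general
    {E : Type*} [MeasurableSpace E] (μ : Measure E) [IsProbabilityMeasure μ]
    (P : Kernel E E) [IsMarkovKernel P]
    (hinv : ∀ B : Set E, MeasurableSet B → ∫⁻ x, P x B ∂μ = μ B)
    (α₁ : ℝ → ℝ)
    (hL1WPI : ∀ r ∈ Set.Ioo (0 : ℝ) (1 / 2), ∀ f : E → ℝ, Measurable f →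
      Integrable f μ →
      (⨅ c : ℝ, ∫ x, |f x - c| ∂μ)
        ≤ α₁ r * ((1 / 2) * ∫ x, ∫ y, |f y - f x| ∂(P x) ∂μ)
          + r * (essSup f μ - essInf f μ)) :
    (∀ r > (0 : ℝ), ∀ f : E → ℝ, Measurable f → MemLp f 2 μ →
      (∫ x, f x ∂μ) = 0 →
      ∫ x, (f x) ^ 2 ∂μ
        ≤ (⨅ θ : Set.Ioo (0 : ℝ) 1,
              α₁ ((1 - (θ : ℝ)) * r) ^ 2 / (2 * (θ : ℝ) * (1 - (θ : ℝ))))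
            * ((1 / 2) * ∫ x, ∫ y, (f y - f x) ^ 2 ∂(P x) ∂μ)
          + r * (essSup f μ - essInf f μ) ^ 2) ∧
    ∀ r > (0 : ℝ),
      (⨅ θ : Set.Ioo (0 : ℝ) 1,
          α₁ ((1 - (θ : ℝ)) * r) ^ 2 / (2 * (θ : ℝ) * (1 - (θ : ℝ))))
        ≤ 2 * α₁ (r / 2) ^ 2 := by
  refine ⟨fun r hr f hf hf2 hmean => ?_, fun r _ => ciInf_sq_div_le α₁ r⟩
  have hP := Kernel.invariant_of_forall_lintegral_eq hinv
  have hfi : Integrable f μ := hf2.integrable one_le_two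
  have hW : L1WeakPoincare μ P (α₁ (1 / 4)) (1 / 4) := hL1WPI _ (by norm_num)
  have hge := isBoundedUnder_ge_ae_of_L1WeakPoincare hW (by norm_num) hf hfi
  have hle := isBoundedUnder_ge_neg.1 <|
    isBoundedUnder_ge_ae_of_L1WeakPoincare hW (by norm_num) hf.neg hfi.neg
  have := Set.nonempty_Ioo_subtype (zero_lt_one' ℝ)
  change _ ≤ _ * dirichletForm μ P f + _
  refine le_ciInf_mul_add (dirichletForm_nonneg μ P f) fun θ => ?_
  by_cases hθr : (1 - (θ : ℝ)) * r < 1 / 2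
  · exact integral_sq_le_of_L1WeakPoincare hP (hL1WPI _ ⟨mul_pos (sub_pos.2 θ.2.2) hr, hθr⟩)
      hr θ.2 hf hmean hle hge
  · have hsmall := integral_sq_le_sq_sub_div_four_of_integral_eq_zero hf.aemeasurable hmean
      (ae_essInf_le hge) (ae_le_essSup hle)
    have hcoef : 0 ≤ α₁ ((1 - (θ : ℝ)) * r) ^ 2 / (2 * (θ : ℝ) * (1 - (θ : ℝ))) :=
      div_nonneg (sq_nonneg _) (mul_nonneg (by linarith [θ.2.1]) (by linarith [θ.2.2]))
    have hr' : 1 / 4 ≤ r := by nlinarith [θ.2.1]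
    nlinarith [mul_nonneg hcoef (dirichletForm_nonneg μ P f),
      mul_le_mul_of_nonneg_right hr' (sq_nonneg (essSup f μ - essInf f μ))]

/-- an `L¹`-weak Poincaré inequality with function `α₁` implies an
`L²`-weak Poincaré inequality with
`α(r) = inf_{θ ∈ (0,1)} α₁((1-θ)r)² / (2θ(1-θ)) ≤ 2 α₁(r/2)²`. -/
theorem L1_WPI_implies_L2_WPI
    {E : Type*} [MeasurableSpace E] (μ : Measure E) [IsProbabilityMeasure μ]
    (P : Kernel E E) [IsMarkovKernel P]
    (hinv : ∀ B : Set E, MeasurableSet B → ∫⁻ x, P x B ∂μ = μ B)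
    (α₁ : ℝ → ℝ) (hα₁pos : ∀ r ∈ Set.Ioo (0 : ℝ) (1 / 2), 0 < α₁ r)
    (hα₁ : Antitone α₁)
    (hL1WPI : ∀ r ∈ Set.Ioo (0 : ℝ) (1 / 2), ∀ f : E → ℝ, Measurable f →
      Integrable f μ →
      (⨅ c : ℝ, ∫ x, |f x - c| ∂μ)
        ≤ α₁ r * ((1 / 2) * ∫ x, ∫ y, |f y - f x| ∂(P x) ∂μ)
          + r * (essSup f μ - essInf f μ)) :
    (∀ r > (0 : ℝ), ∀ f : E → ℝ, Measurable f → MemLp f 2 μ →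
      (∫ x, f x ∂μ) = 0 →
      ∫ x, (f x) ^ 2 ∂μ
        ≤ (⨅ θ : Set.Ioo (0 : ℝ) 1,
              α₁ ((1 - (θ : ℝ)) * r) ^ 2 / (2 * (θ : ℝ) * (1 - (θ : ℝ))))
            * ((1 / 2) * ∫ x, ∫ y, (f y - f x) ^ 2 ∂(P x) ∂μ)
          + r * (essSup f μ - essInf f μ) ^ 2) ∧
    ∀ r > (0 : ℝ),
      (⨅ θ : Set.Ioo (0 : ℝ) 1,
          α₁ ((1 - (θ : ℝ)) * r) ^ 2 / (2 * (θ : ℝ) * (1 - (θ : ℝ))))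
        ≤ 2 * α₁ (r / 2) ^ 2 :=
  L1_WPI_implies_L2_WPI_general μ P hinv α₁ hL1WPI
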